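/- Let $\mu, \nu$ be Borel probability measures on $\mathbb{R}$ with finite $p$-th moments for $p \geq 1$, with cumulative distribution functions $F_\mu, F_\nu$ and quantile functions (generalized inverses) $F_\mu^{-1}, F_\nu^{-1}$. Then the $p$-Wasserstein distance satisfies $W_p(\mu,\nu)^p = \int_0^1 |F_\mu^{-1}(q) - F_\nu^{-1}(q)|^p \, dq$. -/

import Mathlib

open MeasureTheory Set
open scoped ENNReal

/-- A coupling of two measures on `ℝ`: a measure on `ℝ × ℝ` with the given marginals. -/
def IsCoupling (γ : Measure (ℝ × ℝ)) (μ ν : Measure ℝ) : Prop :=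
  γ.map Prod.fst = μ ∧ γ.map Prod.snd = ν

/-- CDF of a measure on `ℝ`. -/
noncomputable def cdfOf (μ : Measure ℝ) (x : ℝ) : ℝ := (μ (Iic x)).toReal

/-- Generalized inverse (quantile function) of the CDF. -/
noncomputable def quantileOf (μ : Measure ℝ) (q : ℝ) : ℝ :=
  sInf {x : ℝ | q ≤ cdfOf μ x}

/-!
Write `t₊ ^ p = ∫ (t - v)₊ dm(v)`, where `m` is the Stieltjes measure of the right derivative of
the convex function `t ↦ t₊ ^ p`, and `(t - v)₊` as the length of `[v, t)`. By Tonelli the cost of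
any coupling `γ` becomes `∫∫ (γ {x > s, y ≤ s - v} + γ {x ≤ s - v, y > s}) ds dm(v)`. Each quadrant
mass is bounded below by the Fréchet bound `(F_ν(b) - F_μ(a))₊` (resp. `(F_μ(a) - F_ν(b))₊`), which
depends only on the marginals, and the quantile coupling `(F_μ⁻¹, F_ν⁻¹)_# Unif(0, 1)` attains it
on every quadrant.
-/

open Filter Topology ProbabilityTheory

section Quantile

variable {μ : Measure ℝ}

lemma nonempty_setOf_le_cdf {q : ℝ} (hq : q < 1) : {x | q ≤ cdf μ x}.Nonempty :=
  ((tendsto_cdf_atTop μ).eventually (eventually_ge_nhds hq)).exists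

lemma bddBelow_setOf_le_cdf {q : ℝ} (hq : 0 < q) : BddBelow {x | q ≤ cdf μ x} := by
  obtain ⟨x₀, hx₀⟩ := ((tendsto_cdf_atBot μ).eventually (eventually_lt_nhds hq)).exists
  exact ⟨x₀, fun x hx => le_of_lt <| (monotone_cdf μ).reflect_lt (hx₀.trans_le hx)⟩

variable [IsProbabilityMeasure μ]

lemma cdfOf_eq_cdf : cdfOf μ = cdf μ :=
  funext fun x => (cdf_eq_real μ x).symm

lemma quantileOf_eq_sInf (q : ℝ) : quantileOf μ q = sInf {x | q ≤ cdf μ x} := by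
  rw [quantileOf, cdfOf_eq_cdf]

lemma le_cdf_quantileOf {q : ℝ} (hq : q ∈ Ioo 0 1) : q ≤ cdf μ (quantileOf μ q) := by
  rw [quantileOf_eq_sInf]
  set a := sInf {x | q ≤ cdf μ x}
  have hright : Tendsto (cdf μ) (𝓝[>] a) (𝓝 (cdf μ a)) :=
    ((cdf μ).right_continuous a).mono Ioi_subset_Ici_self
  refine ge_of_tendsto hright (eventually_nhdsWithin_of_forall fun x hx => ?_)
  obtain ⟨y, hy, hyx⟩ := exists_lt_of_csInf_lt (nonempty_setOf_le_cdf hq.2) hx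
  exact hy.trans (monotone_cdf μ hyx.le)

lemma quantileOf_le_iff {q x : ℝ} (hq : q ∈ Ioo 0 1) : quantileOf μ q ≤ x ↔ q ≤ cdf μ x :=
  ⟨fun h => (le_cdf_quantileOf hq).trans (monotone_cdf μ h),
    fun h => (quantileOf_eq_sInf (μ := μ) q).symm ▸ csInf_le (bddBelow_setOf_le_cdf hq.1) h⟩

lemma lt_quantileOf_iff {q x : ℝ} (hq : q ∈ Ioo 0 1) : x < quantileOf μ q ↔ cdf μ x < q := by
  simpa only [not_le] using (quantileOf_le_iff hq).not

lemma monotoneOn_quantileOf : MonotoneOn (quantileOf μ) (Ioo 0 1) := fun _ ha _ hb hab =>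
  (quantileOf_le_iff ha).2 (hab.trans (le_cdf_quantileOf hb))

lemma volume_Ioc_inter_Ioo_zero_one {c d : ℝ} (hc : 0 ≤ c) (hd : d ≤ 1) :
    volume (Ioc c d ∩ Ioo 0 1) = ENNReal.ofReal (d - c) := by
  rw [measure_congr ((ae_eq_refl _).inter Ioo_ae_eq_Icc),
    inter_eq_left.2 (Ioc_subset_Icc_self.trans (Icc_subset_Icc hc hd)), Real.volume_Ioc]

lemma aemeasurable_quantileOf : AEMeasurable (quantileOf μ) (volume.restrict (Ioo 0 1)) :=
  aemeasurable_restrict_of_monotoneOn measurableSet_Ioo monotoneOn_quantileOf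

lemma map_quantileOf : (volume.restrict (Ioo 0 1)).map (quantileOf μ) = μ := by
  have hmeas := aemeasurable_quantileOf (μ := μ)
  refine Measure.ext_of_Iic _ _ fun x => ?_
  have hpre : quantileOf μ ⁻¹' Iic x ∩ Ioo 0 1 = Ioc 0 (cdf μ x) ∩ Ioo 0 1 := by
    ext q
    simp only [mem_inter_iff, mem_preimage, mem_Iic, mem_Ioc]
    exact ⟨fun ⟨h, hq⟩ => ⟨⟨hq.1, (quantileOf_le_iff hq).1 h⟩, hq⟩,
      fun ⟨h, hq⟩ => ⟨(quantileOf_le_iff hq).2 h.2, hq⟩⟩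
  rw [Measure.map_apply_of_aemeasurable hmeas measurableSet_Iic,
    Measure.restrict_apply' measurableSet_Ioo, hpre,
    volume_Ioc_inter_Ioo_zero_one le_rfl (cdf_le_one μ x), sub_zero, ofReal_cdf]

end Quantile

lemma lintegral_ofReal_sub_eq_lintegral_measure {α : Type*} [MeasurableSpace α] (γ : Measure α)
    [SFinite γ] {f g : α → ℝ} (hf : Measurable f) (hg : Measurable g) :
    ∫⁻ z, ENNReal.ofReal (f z - g z) ∂γ = ∫⁻ s, γ {z | g z ≤ s ∧ s < f z} := by
  have hS : MeasurableSet {w : α × ℝ | g w.1 ≤ w.2 ∧ w.2 < f w.1} :=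
    (measurableSet_le (hg.comp measurable_fst) measurable_snd).inter
      (measurableSet_lt measurable_snd (hf.comp measurable_fst))
  simp_rw [← Real.volume_Ico]
  exact (Measure.prod_apply hS).symm.trans (Measure.prod_apply_symm hS)

section PosPartRpow

variable {p : ℝ}

/-- The right derivative of `t ↦ (max t 0) ^ p`. It is written with an indicator because
`0 ^ (p - 1) = 1` for `p = 1`. -/
noncomputable def posPartRpowDeriv (hp : 1 ≤ p) : StieltjesFunction ℝ where
  toFun := (Ici 0).indicator fun v => p * v ^ (p - 1)
  mono' := by
    intro a b hab
    by_cases ha : 0 ≤ a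
    · rw [indicator_of_mem (mem_Ici.2 ha), indicator_of_mem (mem_Ici.2 (ha.trans hab))]
      gcongr
    · rw [indicator_of_notMem (s := Ici 0) ha]
      exact indicator_nonneg (fun v (hv : 0 ≤ v) => by positivity) b
  right_continuous' := by
    intro x
    rcases lt_or_ge x 0 with hx | hx
    · refine (continuousAt_const.congr (?_ : (fun _ => (0 : ℝ)) =ᶠ[𝓝 x] _)).continuousWithinAt
      filter_upwards [Iio_mem_nhds hx] with v hv
      exact (indicator_of_notMem (not_le.2 hv) _).symm
    · have hcont : Continuous fun v : ℝ => p * v ^ (p - 1) :=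
        continuous_const.mul (Real.continuous_rpow_const (by linarith))
      exact hcont.continuousWithinAt.congr (fun v hv => indicator_of_mem (hx.trans hv) _)
        (indicator_of_mem hx _)

lemma posPartRpowDeriv_apply (hp : 1 ≤ p) (v : ℝ) :
    posPartRpowDeriv hp v = (Ici 0).indicator (fun v => p * v ^ (p - 1)) v := rfl

lemma measure_posPartRpowDeriv_Iic (hp : 1 ≤ p) (s : ℝ) :
    (posPartRpowDeriv hp).measure (Iic s) =
      (Ici 0).indicator (fun v => ENNReal.ofReal (p * v ^ (p - 1))) s := by
  have hbot : Tendsto (posPartRpowDeriv hp) atBot (𝓝 0) := by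
    refine tendsto_const_nhds.congr' ?_
    filter_upwards [eventually_lt_atBot 0] with v hv
    simp [posPartRpowDeriv_apply, not_le.2 hv]
  rw [StieltjesFunction.measure_Iic _ hbot, sub_zero, posPartRpowDeriv_apply]
  by_cases hs : 0 ≤ s <;> simp [hs]

lemma lintegral_Ico_zero_mul_rpow_sub_one (hp : 1 ≤ p) (t : ℝ) :
    ∫⁻ s in Ico 0 t, ENNReal.ofReal (p * s ^ (p - 1)) = ENNReal.ofReal (max t 0 ^ p) := by
  rcases le_total t 0 with ht | ht
  · rw [Ico_eq_empty (not_lt.2 ht), max_eq_right ht, Real.zero_rpow (by linarith)]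
    simp
  have hint : IntervalIntegrable (fun s : ℝ => p * s ^ (p - 1)) volume 0 t :=
    (continuous_const.mul (Real.continuous_rpow_const (by linarith))).intervalIntegrable _ _
  rw [setLIntegral_congr Ico_ae_eq_Ioc, ← ofReal_integral_eq_lintegral_ofReal hint.1
    (ae_restrict_of_forall_mem measurableSet_Ioc fun s hs =>
      mul_nonneg (by linarith) (Real.rpow_nonneg hs.1.le _)),
    ← intervalIntegral.integral_of_le ht, intervalIntegral.integral_const_mul,
    integral_rpow (Or.inl (by linarith)), sub_add_cancel, Real.zero_rpow (by linarith),
    max_eq_left ht]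
  congr 1
  field_simp
  ring

lemma lintegral_ofReal_sub_posPartRpowDeriv (hp : 1 ≤ p) (t : ℝ) :
    ∫⁻ v, ENNReal.ofReal (t - v) ∂(posPartRpowDeriv hp).measure = ENNReal.ofReal (max t 0 ^ p) := by
  have h := lintegral_ofReal_sub_eq_lintegral_measure (posPartRpowDeriv hp).measure
    (measurable_const (a := t)) measurable_id
  dsimp only [id] at h
  rw [h, ← lintegral_Ico_zero_mul_rpow_sub_one hp, ← lintegral_indicator measurableSet_Ico]
  refine lintegral_congr fun s => ?_
  by_cases hst : s < t
  · simp only [hst, and_true]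
    rw [show {z | z ≤ s} = Iic s from rfl, measure_posPartRpowDeriv_Iic]
    by_cases hs : 0 ≤ s <;> simp [hs, hst]
  · simp [hst]

lemma abs_rpow_eq_max_rpow_add_max_rpow (hp : p ≠ 0) (t : ℝ) :
    |t| ^ p = max t 0 ^ p + max (-t) 0 ^ p := by
  have h0 : (0 : ℝ) ^ p = 0 := Real.zero_rpow hp
  rcases le_total 0 t with ht | ht
  · rw [abs_of_nonneg ht, max_eq_left ht, max_eq_right (neg_nonpos.2 ht), h0, add_zero]
  · rw [abs_of_nonpos ht, max_eq_right ht, max_eq_left (neg_nonneg.2 ht), h0, zero_add]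

lemma ofReal_abs_sub_rpow_eq_lintegral (hp : 1 ≤ p) (x y : ℝ) :
    ENNReal.ofReal (|x - y| ^ p) = ∫⁻ v, (ENNReal.ofReal (x - y - v) + ENNReal.ofReal (y - x - v))
      ∂(posPartRpowDeriv hp).measure := by
  rw [lintegral_add_left (by fun_prop), lintegral_ofReal_sub_posPartRpowDeriv,
    lintegral_ofReal_sub_posPartRpowDeriv, abs_rpow_eq_max_rpow_add_max_rpow (by linarith), neg_sub,
    ENNReal.ofReal_add (by positivity) (by positivity)]

end PosPartRpow

lemma lintegral_ofReal_abs_sub_rpow_eq {p : ℝ} (hp : 1 ≤ p) (γ : Measure (ℝ × ℝ)) [SFinite γ] :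
    ∫⁻ z, ENNReal.ofReal (|z.1 - z.2| ^ p) ∂γ = ∫⁻ v,
      ((∫⁻ s, γ (Ioi s ×ˢ Iic (s - v))) + ∫⁻ s, γ (Iic (s - v) ×ˢ Ioi s))
        ∂(posPartRpowDeriv hp).measure := by
  have hquad (v : ℝ) :
      ∫⁻ z, ENNReal.ofReal (z.1 - z.2 - v) ∂γ = ∫⁻ s, γ (Ioi s ×ˢ Iic (s - v)) := by
    simp_rw [sub_sub]
    rw [lintegral_ofReal_sub_eq_lintegral_measure γ (by fun_prop) (by fun_prop)]
    congr! with s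
    ext z
    simp [le_sub_iff_add_le, and_comm]
  have hquad' (v : ℝ) :
      ∫⁻ z, ENNReal.ofReal (z.2 - z.1 - v) ∂γ = ∫⁻ s, γ (Iic (s - v) ×ˢ Ioi s) := by
    simp_rw [sub_sub]
    rw [lintegral_ofReal_sub_eq_lintegral_measure γ (by fun_prop) (by fun_prop)]
    congr! with s
    ext z
    simp [le_sub_iff_add_le]
  calc ∫⁻ z, ENNReal.ofReal (|z.1 - z.2| ^ p) ∂γ
      = ∫⁻ z, ∫⁻ v, (ENNReal.ofReal (z.1 - z.2 - v) + ENNReal.ofReal (z.2 - z.1 - v))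
          ∂(posPartRpowDeriv hp).measure ∂γ :=
        lintegral_congr fun z => ofReal_abs_sub_rpow_eq_lintegral hp z.1 z.2
    _ = ∫⁻ v, ∫⁻ z, (ENNReal.ofReal (z.1 - z.2 - v) + ENNReal.ofReal (z.2 - z.1 - v)) ∂γ
          ∂(posPartRpowDeriv hp).measure :=
        lintegral_lintegral_swap (by fun_prop)
    _ = _ := by
        refine lintegral_congr fun v => ?_
        rw [lintegral_add_left (by fun_prop), hquad, hquad']

namespace IsCoupling

variable {γ : Measure (ℝ × ℝ)} {μ ν : Measure ℝ}

lemma measure_prod_univ (h : IsCoupling γ μ ν) {s : Set ℝ} (hs : MeasurableSet s) :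
    γ (s ×ˢ univ) = μ s := by
  rw [← h.1, Measure.map_apply measurable_fst hs, prod_univ]

lemma measure_univ_prod (h : IsCoupling γ μ ν) {t : Set ℝ} (ht : MeasurableSet t) :
    γ (univ ×ˢ t) = ν t := by
  rw [← h.2, Measure.map_apply measurable_snd ht, univ_prod]

lemma isProbabilityMeasure [IsProbabilityMeasure μ] (h : IsCoupling γ μ ν) :
    IsProbabilityMeasure γ :=
  ⟨by rw [← univ_prod_univ, h.measure_prod_univ MeasurableSet.univ, measure_univ]⟩

lemma measure_le_measure_prod_add_compl_left (h : IsCoupling γ μ ν) {s t : Set ℝ}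
    (hs : MeasurableSet s) (ht : MeasurableSet t) : ν t ≤ γ (s ×ˢ t) + μ sᶜ :=
  calc ν t = γ (univ ×ˢ t) := (h.measure_univ_prod ht).symm
    _ ≤ γ (s ×ˢ t ∪ sᶜ ×ˢ univ) := measure_mono fun z hz => by
        by_cases hzs : z.1 ∈ s
        exacts [Or.inl ⟨hzs, hz.2⟩, Or.inr ⟨hzs, mem_univ _⟩]
    _ ≤ γ (s ×ˢ t) + μ sᶜ := (measure_union_le _ _).trans_eq <| by
        rw [h.measure_prod_univ hs.compl]

lemma measure_le_measure_prod_add_compl_right (h : IsCoupling γ μ ν) {s t : Set ℝ}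
    (hs : MeasurableSet s) (ht : MeasurableSet t) : μ s ≤ γ (s ×ˢ t) + ν tᶜ :=
  calc μ s = γ (s ×ˢ univ) := (h.measure_prod_univ hs).symm
    _ ≤ γ (s ×ˢ t ∪ univ ×ˢ tᶜ) := measure_mono fun z hz => by
        by_cases hzt : z.2 ∈ t
        exacts [Or.inl ⟨hz.1, hzt⟩, Or.inr ⟨mem_univ _, hzt⟩]
    _ ≤ γ (s ×ˢ t) + ν tᶜ := (measure_union_le _ _).trans_eq <| by
        rw [h.measure_univ_prod ht.compl]

variable [IsProbabilityMeasure μ] [IsProbabilityMeasure ν]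

lemma ofReal_cdf_sub_le_measure_Ioi_prod_Iic (h : IsCoupling γ μ ν) (a b : ℝ) :
    ENNReal.ofReal (cdf ν b - cdf μ a) ≤ γ (Ioi a ×ˢ Iic b) := by
  have := h.measure_le_measure_prod_add_compl_left (measurableSet_Ioi (a := a))
    (measurableSet_Iic (a := b))
  rwa [compl_Ioi, ← ofReal_cdf, ← ofReal_cdf, ← tsub_le_iff_right,
    ← ENNReal.ofReal_sub _ (cdf_nonneg μ a)] at this

lemma ofReal_cdf_sub_le_measure_Iic_prod_Ioi (h : IsCoupling γ μ ν) (a b : ℝ) :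
    ENNReal.ofReal (cdf μ a - cdf ν b) ≤ γ (Iic a ×ˢ Ioi b) := by
  have := h.measure_le_measure_prod_add_compl_right (measurableSet_Iic (a := a))
    (measurableSet_Ioi (a := b))
  rwa [compl_Ioi, ← ofReal_cdf, ← ofReal_cdf, ← tsub_le_iff_right,
    ← ENNReal.ofReal_sub _ (cdf_nonneg ν b)] at this

end IsCoupling

noncomputable def quantileCoupling (μ ν : Measure ℝ) : Measure (ℝ × ℝ) :=
  (volume.restrict (Ioo 0 1)).map fun q => (quantileOf μ q, quantileOf ν q)

section QuantileCoupling

variable {μ ν : Measure ℝ} [IsProbabilityMeasure μ] [IsProbabilityMeasure ν]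

lemma aemeasurable_quantileOf_prod :
    AEMeasurable (fun q => (quantileOf μ q, quantileOf ν q)) (volume.restrict (Ioo 0 1)) :=
  aemeasurable_quantileOf.prodMk aemeasurable_quantileOf

lemma isCoupling_quantileCoupling : IsCoupling (quantileCoupling μ ν) μ ν := by
  constructor <;>
  · rw [quantileCoupling, AEMeasurable.map_map_of_aemeasurable (by fun_prop)
      aemeasurable_quantileOf_prod]
    exact map_quantileOf

instance : IsProbabilityMeasure (quantileCoupling μ ν) :=
  isCoupling_quantileCoupling.isProbabilityMeasure

lemma quantileCoupling_Ioi_prod_Iic (a b : ℝ) :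
    quantileCoupling μ ν (Ioi a ×ˢ Iic b) = ENNReal.ofReal (cdf ν b - cdf μ a) := by
  have hpre : (fun q => (quantileOf μ q, quantileOf ν q)) ⁻¹' (Ioi a ×ˢ Iic b) ∩ Ioo 0 1 =
      Ioc (cdf μ a) (cdf ν b) ∩ Ioo 0 1 := by
    ext q
    simp only [mem_inter_iff, mem_preimage, mem_prod, mem_Ioi, mem_Iic, mem_Ioc]
    exact and_congr_left fun hq => and_congr (lt_quantileOf_iff hq) (quantileOf_le_iff hq)
  rw [quantileCoupling, Measure.map_apply_of_aemeasurable aemeasurable_quantileOf_prod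
    (measurableSet_Ioi.prod measurableSet_Iic), Measure.restrict_apply' measurableSet_Ioo, hpre,
    volume_Ioc_inter_Ioo_zero_one (cdf_nonneg μ a) (cdf_le_one ν b)]

lemma quantileCoupling_Iic_prod_Ioi (a b : ℝ) :
    quantileCoupling μ ν (Iic a ×ˢ Ioi b) = ENNReal.ofReal (cdf μ a - cdf ν b) := by
  have hpre : (fun q => (quantileOf μ q, quantileOf ν q)) ⁻¹' (Iic a ×ˢ Ioi b) ∩ Ioo 0 1 =
      Ioc (cdf ν b) (cdf μ a) ∩ Ioo 0 1 := by
    ext q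
    simp only [mem_inter_iff, mem_preimage, mem_prod, mem_Ioi, mem_Iic, mem_Ioc]
    exact and_congr_left fun hq => (and_congr (quantileOf_le_iff hq) (lt_quantileOf_iff hq)).trans
      and_comm
  rw [quantileCoupling, Measure.map_apply_of_aemeasurable aemeasurable_quantileOf_prod
    (measurableSet_Iic.prod measurableSet_Ioi), Measure.restrict_apply' measurableSet_Ioo, hpre,
    volume_Ioc_inter_Ioo_zero_one (cdf_nonneg ν b) (cdf_le_one μ a)]

lemma lintegral_quantileCoupling (p : ℝ) :
    ∫⁻ z, ENNReal.ofReal (|z.1 - z.2| ^ p) ∂quantileCoupling μ ν =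
      ∫⁻ q in Ioo 0 1, ENNReal.ofReal (|quantileOf μ q - quantileOf ν q| ^ p) :=
  lintegral_map' (by fun_prop) aemeasurable_quantileOf_prod

lemma IsCoupling.lintegral_quantileCoupling_le {p : ℝ} (hp : 1 ≤ p) {γ : Measure (ℝ × ℝ)}
    (h : IsCoupling γ μ ν) :
    ∫⁻ z, ENNReal.ofReal (|z.1 - z.2| ^ p) ∂quantileCoupling μ ν ≤
      ∫⁻ z, ENNReal.ofReal (|z.1 - z.2| ^ p) ∂γ := by
  have := h.isProbabilityMeasure
  rw [lintegral_ofReal_abs_sub_rpow_eq hp, lintegral_ofReal_abs_sub_rpow_eq hp]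
  refine lintegral_mono fun v =>
    add_le_add (lintegral_mono fun s => ?_) (lintegral_mono fun s => ?_)
  · rw [quantileCoupling_Ioi_prod_Iic]
    exact h.ofReal_cdf_sub_le_measure_Ioi_prod_Iic _ _
  · rw [quantileCoupling_Iic_prod_Ioi]
    exact h.ofReal_cdf_sub_le_measure_Iic_prod_Ioi _ _

end QuantileCoupling

theorem wasserstein_one_dim_quantile_general
    (p : ℝ) (hp : 1 ≤ p)
    (μ ν : Measure ℝ) [IsProbabilityMeasure μ] [IsProbabilityMeasure ν] :
    sInf {I : ℝ≥0∞ | ∃ γ : Measure (ℝ × ℝ), IsCoupling γ μ ν ∧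
        I = ∫⁻ z, ENNReal.ofReal (|z.1 - z.2| ^ p) ∂γ}
      = ∫⁻ q in Ioo (0 : ℝ) 1,
          ENNReal.ofReal (|quantileOf μ q - quantileOf ν q| ^ p) := by
  rw [← lintegral_quantileCoupling]
  refine le_antisymm (sInf_le ⟨_, isCoupling_quantileCoupling, rfl⟩) (le_sInf ?_)
  rintro _ ⟨γ, hγ, rfl⟩
  exact hγ.lintegral_quantileCoupling_le hp

/-- One-dimensional Wasserstein distance: `W_p(μ,ν)^p` equals the `L^p` distance of the
quantile functions, `∫₀¹ |F_μ⁻¹(q) - F_ν⁻¹(q)|^p dq`. -/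
theorem wasserstein_one_dim_quantile
    (p : ℝ) (hp : 1 ≤ p)
    (μ ν : Measure ℝ) [IsProbabilityMeasure μ] [IsProbabilityMeasure ν]
    (hμ : ∫⁻ x, ENNReal.ofReal (|x| ^ p) ∂μ < ⊤)
    (hν : ∫⁻ x, ENNReal.ofReal (|x| ^ p) ∂ν < ⊤) :
    sInf {I : ℝ≥0∞ | ∃ γ : Measure (ℝ × ℝ), IsCoupling γ μ ν ∧
        I = ∫⁻ z, ENNReal.ofReal (|z.1 - z.2| ^ p) ∂γ}
      = ∫⁻ q in Ioo (0 : ℝ) 1,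
          ENNReal.ofReal (|quantileOf μ q - quantileOf ν q| ^ p) :=
  wasserstein_one_dim_quantile_general p hp μ ν
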